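/- arXiv:1707.05884 — 8 statements merged into one kernel-verified Lean document; each statement's English description precedes it below -/
import Mathlib

section
/- Suppose ω e^β = α. Then for every t > 0, F₁(t) = 1 − exp(−α(e^β + 1)t)·(1 + α t). -/
open Real

/-- Infection probability at time `t` of subject 1 (covariate `x = 1`) in the
two-person-cluster susceptible–infective model. -/
noncomputable def F₁ (α ω β : ℝ) (t : ℝ) : ℝ :=
  α * ∫ s in (0:ℝ)..t,
    (exp β + 1 - exp (-(exp β * (α + ω)) * (t - s))) * exp (-(α * (exp β + 1)) * s)

/-- Infection probability at time `t` of subject 2 (covariate `x = 0`) in the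
two-person-cluster susceptible–infective model. -/
noncomputable def F₂ (α ω β γ : ℝ) (t : ℝ) : ℝ :=
  α * ∫ s in (0:ℝ)..t,
    (exp β + 1 - exp β * exp (-(α + ω * exp γ) * (t - s))) * exp (-(α * (exp β + 1)) * s)

theorem F₁_closed_form_degenerate (α ω β : ℝ) (hα : 0 < α) (hω : 0 ≤ ω)
    (heq : ω * exp β = α) :
    ∀ t : ℝ, 0 < t →
      F₁ α ω β t = 1 - exp (-(α * (exp β + 1)) * t) * (1 + α * t) := by
  intro t ht
  set c : ℝ := α * (exp β + 1) with hc_def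
  have hc : c ≠ 0 := by
    have : 0 < c := mul_pos hα (by positivity)
    linarith
  have hrate : exp β * (α + ω) = c := by
    rw [hc_def]
    have h : exp β * ω = α := by rw [mul_comm]; exact heq
    nlinarith [h]
  set G : ℝ → ℝ := fun s => -((exp β + 1) / c) * exp (-c * s) - exp (-c * t) * s with hG
  have hderiv : ∀ s ∈ Set.uIcc (0:ℝ) t, HasDerivAt G
      ((exp β + 1 - exp (-(exp β * (α + ω)) * (t - s))) * exp (-(α * (exp β + 1)) * s)) s := by
    intro s _
    have h1 : HasDerivAt (fun s : ℝ => exp (-c * s)) (exp (-c * s) * (-c)) s := by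
      simpa using ((hasDerivAt_id s).const_mul (-c)).exp
    have h2 : HasDerivAt G (-((exp β + 1) / c) * (exp (-c * s) * (-c)) - exp (-c * t) * 1) s :=
      (h1.const_mul (-((exp β + 1) / c))).sub ((hasDerivAt_id s).const_mul (exp (-c * t)))
    convert h2 using 1
    rw [hrate]
    have hexp : exp (-c * t) = exp (-c * (t - s)) * exp (-c * s) := by
      rw [← Real.exp_add]; ring_nf
    have hd : -((exp β + 1) / c) * (exp (-c * s) * (-c)) = (exp β + 1) * exp (-c * s) := by
      field_simp
    rw [hd, mul_one, hexp]
    ring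
  have hcont : Continuous fun s =>
      (exp β + 1 - exp (-(exp β * (α + ω)) * (t - s))) * exp (-(α * (exp β + 1)) * s) := by
    continuity
  have hint := intervalIntegral.integral_eq_sub_of_hasDerivAt hderiv
    (hcont.intervalIntegrable 0 t)
  rw [F₁, hint, hG]
  simp only [mul_zero, Real.exp_zero, mul_one]
  have key : α * ((exp β + 1) / c) = 1 := by
    rw [hc_def]; field_simp
  linear_combination (1 - exp (-c * t)) * key
end

section
/- Suppose ω e^β ≠ α and α e^β ≠ ω e^γ. Then for every t > 0, (α − ω e^β)(α e^β − ω e^γ)·(F₁(t) − F₂(t)) = α·[ω(e^{2β} − e^γ)·exp(−α(e^β + 1)t) + (ω e^γ − α e^β)·exp(−e^β(α + ω)t) + e^β(α − ω e^β)·exp(−(α + ω e^γ)t)]. In particular, the sign of the risk difference F₁(t) − F₂(t) equals the sign of the right-hand bracketed expression divided by (α − ω e^β)(α e^β − ω e^γ). -/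
open Real

/-!
The constant terms `exp β + 1` cancel in `F₁ - F₂`, which leaves two exponential convolutions
`∫₀ᵗ exp (-B (t - s)) exp (-A s) ds` with `A = α (exp β + 1)`, and `(B - A)` times such a
convolution is `exp (-A t) - exp (-B t)`. For the two rates `B = exp β (α + ω)` and
`C = α + ω exp γ` the differences `B - A = ω exp β - α` and `C - A = ω exp γ - α exp β` are,
up to sign, the two prefactors on the left, so the identity is a ring identity after that.
-/

theorem mul_integral_exp_mul (c a b : ℝ) :
    c * ∫ s in a..b, exp (c * s) = exp (c * b) - exp (c * a) := by
  rw [← intervalIntegral.integral_const_mul]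
  refine intervalIntegral.integral_eq_sub_of_hasDerivAt (f := fun s => exp (c * s)) (fun s _ => ?_)
    ((by fun_prop : Continuous fun s => c * exp (c * s)).intervalIntegrable a b)
  simpa [mul_comm] using ((hasDerivAt_id s).const_mul c).exp

theorem sub_mul_integral_exp_mul_exp (A B t : ℝ) :
    (B - A) * ∫ s in (0:ℝ)..t, exp (-B * (t - s)) * exp (-A * s) =
      exp (-A * t) - exp (-B * t) := by
  have h : ∀ s, exp (-B * (t - s)) * exp (-A * s) = exp (-B * t) * exp ((B - A) * s) := by
    intro s
    rw [← exp_add, ← exp_add]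
    ring_nf
  simp_rw [h, intervalIntegral.integral_const_mul, mul_left_comm (B - A), mul_integral_exp_mul,
    mul_sub, ← exp_add]
  ring_nf

theorem F₁_sub_F₂ (α ω β γ t : ℝ) :
    F₁ α ω β t - F₂ α ω β γ t =
      α * (exp β * (∫ s in (0:ℝ)..t,
          exp (-(α + ω * exp γ) * (t - s)) * exp (-(α * (exp β + 1)) * s)) -
        ∫ s in (0:ℝ)..t, exp (-(exp β * (α + ω)) * (t - s)) * exp (-(α * (exp β + 1)) * s)) := by
  have hint {f : ℝ → ℝ} (hf : Continuous f) : IntervalIntegrable f MeasureTheory.volume 0 t :=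
    hf.intervalIntegrable 0 t
  rw [F₁, F₂, ← mul_sub, ← intervalIntegral.integral_sub (hint (by fun_prop)) (hint (by fun_prop)),
    ← intervalIntegral.integral_const_mul (exp β),
    ← intervalIntegral.integral_sub (hint (by fun_prop)) (hint (by fun_prop))]
  congr 1
  refine intervalIntegral.integral_congr fun s _ => ?_
  ring

theorem risk_difference_formula_general (α ω β γ : ℝ) :
    ∀ t : ℝ, 0 < t →
      (α - ω * exp β) * (α * exp β - ω * exp γ) * (F₁ α ω β t - F₂ α ω β γ t) =
        α * (ω * (exp (2 * β) - exp γ) * exp (-(α * (exp β + 1)) * t)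
          + (ω * exp γ - α * exp β) * exp (-(exp β * (α + ω)) * t)
          + exp β * (α - ω * exp β) * exp (-(α + ω * exp γ) * t)) := by
  intro t _
  have hB := sub_mul_integral_exp_mul_exp (α * (exp β + 1)) (exp β * (α + ω)) t
  have hC := sub_mul_integral_exp_mul_exp (α * (exp β + 1)) (α + ω * exp γ) t
  rw [F₁_sub_F₂, show 2 * β = β + β by ring, exp_add]
  linear_combination α * exp β * (exp β * (α + ω) - α * (exp β + 1)) * hC
    - α * (α + ω * exp γ - α * (exp β + 1)) * hB

theorem risk_difference_formula (α ω β γ : ℝ) (hα : 0 < α) (hω : 0 ≤ ω)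
    (hne₁ : ω * exp β ≠ α) (hne₂ : α * exp β ≠ ω * exp γ) :
    ∀ t : ℝ, 0 < t →
      (α - ω * exp β) * (α * exp β - ω * exp γ) * (F₁ α ω β t - F₂ α ω β γ t) =
        α * (ω * (exp (2 * β) - exp γ) * exp (-(α * (exp β + 1)) * t)
          + (ω * exp γ - α * exp β) * exp (-(exp β * (α + ω)) * t)
          + exp β * (α - ω * exp β) * exp (-(α + ω * exp γ) * t)) :=
  risk_difference_formula_general α ω β γ
end

section
/- (No within-cluster contagion, Result 1.) Suppose α > 0 and ω = 0. Then for every T > 0 the risk ratio is direction-unbiased: if β < 0 then F₁(T) < F₂(T); if β = 0 then F₁(T) = F₂(T); and if β > 0 then F₁(T) > F₂(T). -/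
open Real

theorem no_within_cluster_contagion (α ω β γ : ℝ) (hα : 0 < α) (hω : ω = 0) :
    ∀ T : ℝ, 0 < T →
      (β < 0 → F₁ α ω β T < F₂ α ω β γ T) ∧
      (β = 0 → F₁ α ω β T = F₂ α ω β γ T) ∧
      (0 < β → F₂ α ω β γ T < F₁ α ω β T) := by
  subst hω
  intro T hT
  have hint1 : IntervalIntegrable
      (fun s => (exp β + 1 - exp (-(exp β * (α + 0)) * (T - s))) * exp (-(α * (exp β + 1)) * s))
      MeasureTheory.volume 0 T := by
    apply Continuous.intervalIntegrable; fun_prop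
  have hint2 : IntervalIntegrable
      (fun s => (exp β + 1 - exp β * exp (-(α + 0 * exp γ) * (T - s))) * exp (-(α * (exp β + 1)) * s))
      MeasureTheory.volume 0 T := by
    apply Continuous.intervalIntegrable; fun_prop
  have hintg : IntervalIntegrable
      (fun s => (exp β * exp (-(α + 0 * exp γ) * (T - s)) - exp (-(exp β * (α + 0)) * (T - s)))
        * exp (-(α * (exp β + 1)) * s)) MeasureTheory.volume 0 T := by
    apply Continuous.intervalIntegrable; fun_prop
  have hsub : F₁ α 0 β T - F₂ α 0 β γ T
      = α * ∫ s in (0:ℝ)..T,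
          (exp β * exp (-(α + 0 * exp γ) * (T - s)) - exp (-(exp β * (α + 0)) * (T - s)))
            * exp (-(α * (exp β + 1)) * s) := by
    unfold F₁ F₂
    rw [← mul_sub, ← intervalIntegral.integral_sub hint1 hint2]
    congr 1
    apply intervalIntegral.integral_congr
    intro s _
    ring
  have key : ∀ s ∈ Set.Ioo (0:ℝ) T,
      (0 < β → exp (-(exp β * (α + 0)) * (T - s)) < exp β * exp (-(α + 0 * exp γ) * (T - s))) ∧
      (β < 0 → exp β * exp (-(α + 0 * exp γ) * (T - s)) < exp (-(exp β * (α + 0)) * (T - s))) := by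
    intro s hs
    have hu : 0 < T - s := by linarith [hs.2]
    rw [← Real.exp_add]
    constructor
    · intro hβ
      apply Real.exp_lt_exp.2
      have h1 : 1 < exp β := by
        calc (1:ℝ) = exp 0 := Real.exp_zero.symm
        _ < exp β := Real.exp_lt_exp.2 hβ
      nlinarith [mul_pos (mul_pos hα hu) (sub_pos.mpr h1)]
    · intro hβ
      apply Real.exp_lt_exp.2
      have h1 : exp β < 1 := by
        calc exp β < exp 0 := Real.exp_lt_exp.2 hβ
        _ = 1 := Real.exp_zero
      nlinarith [mul_pos (mul_pos hα hu) (sub_pos.mpr h1)]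
  refine ⟨?_, ?_, ?_⟩
  · intro hβ
    have hpos : 0 < ∫ s in (0:ℝ)..T,
        -((exp β * exp (-(α + 0 * exp γ) * (T - s)) - exp (-(exp β * (α + 0)) * (T - s)))
          * exp (-(α * (exp β + 1)) * s)) := by
      apply intervalIntegral.intervalIntegral_pos_of_pos_on hintg.neg
      · intro s hs
        have := (key s hs).2 hβ
        have hE := Real.exp_pos (-(α * (exp β + 1)) * s)
        simp only [Pi.neg_apply]
        nlinarith
      · exact hT
    rw [intervalIntegral.integral_neg] at hpos
    nlinarith [hsub]
  · intro hβ
    have : F₁ α 0 β T - F₂ α 0 β γ T = 0 := by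
      rw [hsub]
      have : ∀ s ∈ Set.uIcc (0:ℝ) T,
          (exp β * exp (-(α + 0 * exp γ) * (T - s)) - exp (-(exp β * (α + 0)) * (T - s)))
            * exp (-(α * (exp β + 1)) * s) = 0 := by
        intro s _
        subst hβ
        simp [Real.exp_zero]
      rw [intervalIntegral.integral_congr this]
      simp
    linarith
  · intro hβ
    have hpos : 0 < ∫ s in (0:ℝ)..T,
        (exp β * exp (-(α + 0 * exp γ) * (T - s)) - exp (-(exp β * (α + 0)) * (T - s)))
          * exp (-(α * (exp β + 1)) * s) := by
      apply intervalIntegral.intervalIntegral_pos_of_pos_on hintg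
      · intro s hs
        have := (key s hs).1 hβ
        have hE := Real.exp_pos (-(α * (exp β + 1)) * s)
        nlinarith
      · exact hT
    nlinarith [hsub]
end

section
/- (Homogeneous infectiousness, Result 3.) Suppose α > 0, ω > 0 and γ = 0. Then for every T > 0 the risk ratio is direction-unbiased: if β < 0 then F₁(T) < F₂(T); if β = 0 then F₁(T) = F₂(T); and if β > 0 then F₁(T) > F₂(T). -/
open Real

lemma expcmp_neg {β u : ℝ} (hβ : β < 0) (hu : 0 ≤ u) :
    exp β * exp (-u) < exp (-(exp β * u)) := by
  rw [← Real.exp_add, Real.exp_lt_exp]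
  have h1 : exp β < 1 := by
    have := Real.exp_lt_exp.2 hβ; simpa using this
  nlinarith

lemma expcmp_pos {β u : ℝ} (hβ : 0 < β) (hu : 0 ≤ u) :
    exp (-(exp β * u)) < exp β * exp (-u) := by
  rw [← Real.exp_add, Real.exp_lt_exp]
  have h1 : 1 < exp β := by
    have := Real.exp_lt_exp.2 hβ; simpa using this
  nlinarith

lemma cont_aux (a b c T : ℝ) :
    ContinuousOn (fun s : ℝ => (a - exp (b * (T - s))) * exp (c * s)) (Set.Icc 0 T) := by
  fun_prop

lemma cont_aux2 (a a' b c T : ℝ) :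
    ContinuousOn (fun s : ℝ => (a - a' * exp (b * (T - s))) * exp (c * s)) (Set.Icc 0 T) := by
  fun_prop

theorem homogeneous_infectiousness (α ω β γ : ℝ) (hα : 0 < α) (hω : 0 < ω) (hγ : γ = 0) :
    ∀ T : ℝ, 0 < T →
      (β < 0 → F₁ α ω β T < F₂ α ω β γ T) ∧
      (β = 0 → F₁ α ω β T = F₂ α ω β γ T) ∧
      (0 < β → F₂ α ω β γ T < F₁ α ω β T) := by
  subst hγ
  intro T hT
  have haw : 0 < α + ω := by linarith
  have hu : ∀ s ∈ Set.Icc (0:ℝ) T, 0 ≤ (α + ω) * (T - s) := by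
    intro s hs
    exact mul_nonneg haw.le (by linarith [hs.2])
  -- pointwise comparison for β < 0
  refine ⟨?_, ?_, ?_⟩
  · intro hβ
    unfold F₁ F₂
    simp only [Real.exp_zero, mul_one]
    apply mul_lt_mul_of_pos_left _ hα
    have key : ∀ s ∈ Set.Icc (0:ℝ) T,
        (exp β + 1 - exp (-(exp β * (α + ω)) * (T - s))) * exp (-(α * (exp β + 1)) * s)
        < (exp β + 1 - exp β * exp (-(α + ω) * (T - s))) * exp (-(α * (exp β + 1)) * s) := by
      intro s hs
      apply mul_lt_mul_of_pos_right _ (Real.exp_pos _)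
      apply sub_lt_sub_left
      have := expcmp_neg hβ (hu s hs)
      calc exp β * exp (-(α + ω) * (T - s)) = exp β * exp (-((α + ω) * (T - s))) := by
            ring_nf
        _ < exp (-(exp β * ((α + ω) * (T - s)))) := this
        _ = exp (-(exp β * (α + ω)) * (T - s)) := by ring_nf
    apply intervalIntegral.integral_lt_integral_of_continuousOn_of_le_of_exists_lt hT
      (cont_aux _ _ _ _) (cont_aux2 _ _ _ _ _)
      (fun x hx => (key x ⟨hx.1.le, hx.2⟩).le)
      ⟨0, ⟨le_refl _, hT.le⟩, key 0 ⟨le_refl _, hT.le⟩⟩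
  · intro hβ
    subst hβ
    unfold F₁ F₂
    simp
  · intro hβ
    unfold F₁ F₂
    simp only [Real.exp_zero, mul_one]
    apply mul_lt_mul_of_pos_left _ hα
    have key : ∀ s ∈ Set.Icc (0:ℝ) T,
        (exp β + 1 - exp β * exp (-(α + ω) * (T - s))) * exp (-(α * (exp β + 1)) * s)
        < (exp β + 1 - exp (-(exp β * (α + ω)) * (T - s))) * exp (-(α * (exp β + 1)) * s) := by
      intro s hs
      apply mul_lt_mul_of_pos_right _ (Real.exp_pos _)
      apply sub_lt_sub_left
      have := expcmp_pos hβ (hu s hs)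
      calc exp (-(exp β * (α + ω)) * (T - s)) = exp (-(exp β * ((α + ω) * (T - s)))) := by
            ring_nf
        _ < exp β * exp (-((α + ω) * (T - s))) := this
        _ = exp β * exp (-(α + ω) * (T - s)) := by ring_nf
    apply intervalIntegral.integral_lt_integral_of_continuousOn_of_le_of_exists_lt hT
      (cont_aux2 _ _ _ _ _) (cont_aux _ _ _ _)
      (fun x hx => (key x ⟨hx.1.le, hx.2⟩).le)
      ⟨0, ⟨le_refl _, hT.le⟩, key 0 ⟨le_refl _, hT.le⟩⟩
end

section
/- (Direction bias, Result 4, case β < 0.) Suppose α > 0, ω > 0, β < 0 and e^γ < min{e^{2β}, e^β + (α/ω)(e^β − 1)}. Then there exists t* > 0 such that for all T > t*, F₁(T) > F₂(T); that is, the risk ratio exceeds 1 even though β < 0, so the risk ratio is not direction-unbiased. -/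
open Real

open Filter intervalIntegral

lemma Aexp (k t : ℝ) (hk : k ≠ 0) : ∫ u in (0:ℝ)..t, exp (k*u) = (exp (k*t) - 1)/k := by
  have h : ∀ x ∈ Set.uIcc (0:ℝ) t, HasDerivAt (fun u => exp (k*u)/k) (exp (k*x)) x := by
    intro x _
    have : HasDerivAt (fun u : ℝ => exp (k*u)/k) (exp (k * id x) * (k*1) / k) x :=
      (((hasDerivAt_id x).const_mul k).exp).div_const k
    simpa [mul_comm, mul_div_cancel_left₀ _ hk] using this
  have := intervalIntegral.integral_eq_sub_of_hasDerivAt h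
    ((by fun_prop : Continuous fun u : ℝ => exp (k*u)).intervalIntegrable 0 t)
  simp at this
  rw [this]; field_simp

lemma exp_mul_tendsto_zero (p : ℝ) (hp : p < 0) :
    Tendsto (fun t : ℝ => exp (p*t)) atTop (nhds 0) :=
  Real.tendsto_exp_atBot.comp (tendsto_id.const_mul_atTop_of_neg hp)

lemma exp_mul_tendsto_top (p : ℝ) (hp : 0 < p) :
    Tendsto (fun t : ℝ => exp (p*t)) atTop atTop :=
  Real.tendsto_exp_atTop.comp (tendsto_id.const_mul_atTop hp)

lemma pos_of_mul_pos' {x c : ℝ} (h : 0 < x * c) (hc : 0 < c) : 0 < x := by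
  rcases mul_pos_iff.mp h with ⟨hx, _⟩ | ⟨_, hc'⟩
  · exact hx
  · linarith

lemma eventuallyPos (β p q : ℝ) (hβ : β < 0) (hqp : q < p) (hkey : q * exp β < p) :
    ∀ᶠ t in atTop, 0 < ∫ u in (0:ℝ)..t, (exp β * exp (p*u) - exp (q*u)) := by
  have hEβ : 0 < exp β := exp_pos β
  have hsplit : ∀ t : ℝ, (∫ u in (0:ℝ)..t, (exp β * exp (p*u) - exp (q*u)))
      = exp β * (∫ u in (0:ℝ)..t, exp (p*u)) - ∫ u in (0:ℝ)..t, exp (q*u) := by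
    intro t
    rw [intervalIntegral.integral_sub
      (((by fun_prop : Continuous fun u : ℝ => exp β * exp (p*u))).intervalIntegrable 0 t)
      (((by fun_prop : Continuous fun u : ℝ => exp (q*u))).intervalIntegrable 0 t),
      intervalIntegral.integral_const_mul]
  rcases lt_trichotomy p 0 with hp | hp | hp
  · -- p < 0, hence q < 0
    have hq : q < 0 := by nlinarith
    have hnum : 0 < p - q * exp β := by linarith
    have hden : 0 < (-q) * exp β := mul_pos (neg_pos.2 hq) hEβ
    have hev1 : ∀ᶠ t in atTop, exp (p*t) < (p - q*exp β)/((-q)*exp β) :=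
      (exp_mul_tendsto_zero p hp).eventually (eventually_lt_nhds (div_pos hnum hden))
    filter_upwards [hev1] with t h1
    rw [hsplit t, Aexp p t hp.ne, Aexp q t hq.ne]
    have h1' : exp (p*t) * ((-q)*exp β) < p - q*exp β := (lt_div_iff₀ hden).mp h1
    have hE1 : 0 < exp (p*t) := exp_pos _
    have hE2 : 0 < exp (q*t) := exp_pos _
    have hpq : 0 < p * q := mul_pos_of_neg_of_neg hp hq
    set E1 := exp (p*t) with hE1def
    set E2 := exp (q*t) with hE2def
    have key : 0 < (exp β * ((E1 - 1)/p) - (E2 - 1)/q) * (p*q) := by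
      have heq : (exp β * ((E1 - 1)/p) - (E2 - 1)/q) * (p*q)
          = (p - q*exp β) - E1 * ((-q)*exp β) - p * E2 := by
        field_simp [(ne_of_lt hp), (ne_of_lt hq)]; ring
      rw [heq]; nlinarith
    exact pos_of_mul_pos' key hpq
  · -- p = 0, q < 0
    subst hp
    have hq : q < 0 := hqp
    filter_upwards [eventually_gt_atTop (1/((-q)*exp β)), eventually_gt_atTop 0] with t h1 ht
    rw [hsplit t, Aexp q t hq.ne]
    have h1' : 1 < t * ((-q)*exp β) := (div_lt_iff₀ (mul_pos (neg_pos.2 hq) hEβ)).mp h1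
    have hE2 : 0 < exp (q*t) := exp_pos _
    have hint : (∫ u in (0:ℝ)..t, exp (0*u)) = t := by simp
    rw [hint]
    set E2 := exp (q*t) with hE2def
    have key : 0 < (exp β * t - (E2 - 1)/q) * (-q) := by
      have heq : (exp β * t - (E2 - 1)/q) * (-q)
          = t * ((-q)*exp β) + E2 - 1 := by field_simp [(ne_of_lt hq)]; ring
      rw [heq]; nlinarith
    exact pos_of_mul_pos' key (neg_pos.2 hq)
  · -- p > 0
    rcases lt_trichotomy q 0 with hq | hq | hq
    · have hev1 : ∀ᶠ t in atTop, exp β*(-q) + p < exp (p*t) * (exp β * (-q)) :=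
        ((exp_mul_tendsto_top p hp).atTop_mul_const
          (mul_pos hEβ (neg_pos.2 hq))).eventually_gt_atTop _
      filter_upwards [hev1] with t h1
      rw [hsplit t, Aexp p t hp.ne', Aexp q t hq.ne]
      have hE2 : 0 < exp (q*t) := exp_pos _
      set E1 := exp (p*t) with hE1def
      set E2 := exp (q*t) with hE2def
      have key : 0 < (exp β * ((E1 - 1)/p) - (E2 - 1)/q) * (p*(-q)) := by
        have heq : (exp β * ((E1 - 1)/p) - (E2 - 1)/q) * (p*(-q))
            = E1 * (exp β * (-q)) - exp β * (-q) + (E2 - 1) * p := by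
          field_simp [(ne_of_gt hp), (ne_of_lt hq)]; ring
        rw [heq]; nlinarith
      exact pos_of_mul_pos' key (mul_pos hp (neg_pos.2 hq))
    · subst hq
      filter_upwards [eventually_gt_atTop ((4*(1 - exp β))/(exp β * p)),
        eventually_gt_atTop 0] with t h1 ht
      rw [hsplit t, Aexp p t hp.ne']
      have hint : (∫ u in (0:ℝ)..t, exp (0*u)) = t := by simp
      rw [hint]
      have h1' : 4*(1 - exp β) < t * (exp β * p) := (div_lt_iff₀ (mul_pos hEβ hp)).mp h1
      have hsq : (1 + p*t/2)^2 ≤ exp (p*t) := by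
        have h0 : (0:ℝ) ≤ 1 + p*t/2 := by nlinarith
        have hle : 1 + p*t/2 ≤ exp (p*t/2) := by
          linarith [Real.add_one_le_exp (p*t/2)]
        calc (1 + p*t/2)^2 ≤ exp (p*t/2) * exp (p*t/2) := by nlinarith [exp_pos (p*t/2)]
          _ = exp (p*t) := by rw [← exp_add]; ring_nf
      set E1 := exp (p*t) with hE1def
      have key : 0 < (exp β * ((E1 - 1)/p) - t) * p := by
        have heq : (exp β * ((E1 - 1)/p) - t) * p
            = exp β * E1 - exp β - p*t := by field_simp [(ne_of_gt hp)]
        rw [heq]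
        nlinarith [mul_le_mul_of_nonneg_left hsq hEβ.le, mul_pos hp ht]
      exact pos_of_mul_pos' key hp
    · -- 0 < q < p
      have hr : 0 < p - q := by linarith
      have hev1 : ∀ᶠ t in atTop, p < exp ((p-q)*t) * (q * exp β) :=
        ((exp_mul_tendsto_top (p-q) hr).atTop_mul_const
          (mul_pos hq hEβ)).eventually_gt_atTop _
      filter_upwards [hev1] with t h1
      rw [hsplit t, Aexp p t hp.ne', Aexp q t hq.ne']
      have hE2 : 0 < exp (q*t) := exp_pos _
      have hsplitE : exp (p*t) = exp (q*t) * exp ((p-q)*t) := by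
        rw [← exp_add]; ring_nf
      set E2 := exp (q*t) with hE2def
      set E3 := exp ((p-q)*t) with hE3def
      have key : 0 < (exp β * ((E2 * E3 - 1)/p) - (E2 - 1)/q) * (p*q) := by
        have heq : (exp β * ((E2 * E3 - 1)/p) - (E2 - 1)/q) * (p*q)
            = E2 * (E3 * (q*exp β) - p) + (p - q*exp β) := by
          field_simp [(ne_of_gt hp), (ne_of_gt hq)]; ring
        rw [heq]; nlinarith
      rw [hsplitE]
      exact pos_of_mul_pos' key (mul_pos hp hq)

theorem direction_bias_neg (α ω β γ : ℝ) (hα : 0 < α) (hω : 0 < ω) (hβ : β < 0)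
    (hγ : exp γ < min (exp (2 * β)) (exp β + (α / ω) * (exp β - 1))) :
    ∃ tstar : ℝ, 0 < tstar ∧ ∀ T : ℝ, tstar < T → F₂ α ω β γ T < F₁ α ω β T := by
  obtain ⟨h1, h2⟩ := lt_min_iff.mp hγ
  rw [two_mul, exp_add] at h1
  have h2' : ω * exp γ < ω * exp β + α * (exp β - 1) := by
    have := (mul_lt_mul_of_pos_left h2 hω)
    have hω' : ω ≠ 0 := hω.ne'
    field_simp at this
    nlinarith [this]
  set c : ℝ := α * (exp β + 1) with hc
  set p : ℝ := c - (α + ω * exp γ) with hp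
  set q : ℝ := c - exp β * (α + ω) with hq
  have hqp : q < p := by simp only [hp, hq, hc]; nlinarith
  have hkey : q * exp β < p := by
    simp only [hp, hq, hc]
    nlinarith [mul_pos hω (sub_pos.2 h1), exp_pos β]
  set g : ℝ → ℝ := fun u => exp β * exp (p*u) - exp (q*u) with hg
  have hgcont : Continuous g := by fun_prop
  have hD : ∀ T : ℝ, F₁ α ω β T - F₂ α ω β γ T
      = α * exp (-(c*T)) * ∫ u in (0:ℝ)..T, g u := by
    intro T
    rw [F₁, F₂, ← mul_sub]
    rw [← intervalIntegral.integral_sub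
      ((by fun_prop : Continuous fun s : ℝ =>
        (exp β + 1 - exp (-(exp β * (α + ω)) * (T - s))) * exp (-(α * (exp β + 1)) * s)).intervalIntegrable 0 T)
      ((by fun_prop : Continuous fun s : ℝ =>
        (exp β + 1 - exp β * exp (-(α + ω * exp γ) * (T - s))) * exp (-(α * (exp β + 1)) * s)).intervalIntegrable 0 T)]
    have hcongr : ∀ s : ℝ,
        (exp β + 1 - exp (-(exp β * (α + ω)) * (T - s))) * exp (-(α * (exp β + 1)) * s)
        - (exp β + 1 - exp β * exp (-(α + ω * exp γ) * (T - s))) * exp (-(α * (exp β + 1)) * s)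
        = exp (-(c*T)) * g (T - s) := by
      intro s
      have e1 : exp (-(α + ω * exp γ) * (T - s)) * exp (-(α * (exp β + 1)) * s)
          = exp (-(c*T)) * exp (p*(T-s)) := by
        rw [← exp_add, ← exp_add]; congr 1; simp only [hp, hc]; ring
      have e2 : exp (-(exp β * (α + ω)) * (T - s)) * exp (-(α * (exp β + 1)) * s)
          = exp (-(c*T)) * exp (q*(T-s)) := by
        rw [← exp_add, ← exp_add]; congr 1; simp only [hq, hc]; ring
      simp only [hg]
      linear_combination (exp β) * e1 - e2
    rw [intervalIntegral.integral_congr (fun s _ => hcongr s),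
      intervalIntegral.integral_const_mul,
      intervalIntegral.integral_comp_sub_left g T]
    simp [mul_assoc]
  have hev := eventuallyPos β p q hβ hqp hkey
  have hr : 0 < p - q := by linarith
  obtain ⟨t₁, hHt₁, ht₁⟩ :=
    (hev.and (eventually_gt_atTop (max (-β/(p-q)) 0))).exists
  refine ⟨t₁, lt_of_le_of_lt (le_max_right _ _) ht₁, ?_⟩
  intro T hT
  have ht₁u : -β/(p-q) < t₁ := lt_of_le_of_lt (le_max_left _ _) ht₁
  have hgnn : ∀ u ∈ Set.Icc t₁ T, 0 ≤ g u := by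
    intro u hu
    have hu' : -β/(p-q) < u := lt_of_lt_of_le ht₁u hu.1
    have : -β < u * (p-q) := (div_lt_iff₀ hr).mp hu'
    have hle : exp (q*u) ≤ exp β * exp (p*u) := by
      rw [← exp_add]
      exact exp_le_exp.2 (by nlinarith)
    simp only [hg]; linarith
  have hpos : 0 < ∫ u in (0:ℝ)..T, g u := by
    have hadd : (∫ u in (0:ℝ)..t₁, g u) + ∫ u in t₁..T, g u = ∫ u in (0:ℝ)..T, g u :=
      intervalIntegral.integral_add_adjacent_intervals
        (hgcont.intervalIntegrable 0 t₁) (hgcont.intervalIntegrable t₁ T)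
    have hnn : 0 ≤ ∫ u in t₁..T, g u :=
      intervalIntegral.integral_nonneg hT.le (fun u hu => hgnn u hu)
    linarith [hHt₁]
  have := hD T
  have hfin : 0 < F₁ α ω β T - F₂ α ω β γ T := by
    rw [this]
    exact mul_pos (mul_pos hα (exp_pos _)) hpos
  linarith
end

section
/- (Direction bias, Result 4, case β > 0.) Suppose α > 0, ω > 0, β > 0 and e^γ > max{e^{2β}, e^β + (α/ω)(e^β − 1)}. Then there exists t* > 0 such that for all T > t*, F₁(T) < F₂(T); that is, the risk ratio is below 1 even though β > 0, so the risk ratio is not direction-unbiased. -/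
open Real

/-!
Substituting `u = T - s`, `F₂ T - F₁ T = α e^{-aT} ∫₀ᵀ (e^{pu} - e^β e^{qu}) du` with
`a = α (e^β + 1)`, `p = a - e^β (α + ω)` and `q = a - (α + ω e^γ)`; the hypothesis on `γ` says
exactly that `q < p` and `q < e^β p`. If `p ≥ 0` the integrand is eventually at least `1/2`, so
the integral tends to `+∞`; if `p < 0` it converges to `e^β / q - 1 / p = (e^β p - q) / (p q) > 0`.
-/

open Filter Topology MeasureTheory Set

theorem tendsto_intervalIntegral_atTop_of_eventually_ge {f : ℝ → ℝ} {a c : ℝ}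
    (hf : Continuous f) (hc : 0 < c) (h : ∀ᶠ s in atTop, c ≤ f s) :
    Tendsto (fun T => ∫ s in a..T, f s) atTop atTop := by
  obtain ⟨s₀, hs₀⟩ := eventually_atTop.1 h
  have hlin : Tendsto (fun T => (∫ s in a..s₀, f s) + c * (T - s₀)) atTop atTop :=
    tendsto_atTop_add_const_left _ _
      ((tendsto_atTop_add_const_right _ (-s₀) tendsto_id).const_mul_atTop hc)
  refine tendsto_atTop_mono' atTop ?_ hlin
  filter_upwards [eventually_ge_atTop s₀] with T hT
  rw [← intervalIntegral.integral_add_adjacent_intervals (hf.intervalIntegrable a s₀)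
    (hf.intervalIntegrable s₀ T)]
  gcongr
  calc c * (T - s₀) = ∫ _ in s₀..T, c := by simp [mul_comm]
    _ ≤ ∫ s in s₀..T, f s := intervalIntegral.integral_mono_on hT intervalIntegrable_const
      (hf.intervalIntegrable _ _) fun s hs => hs₀ s hs.1

section ExpDifference

variable {p q : ℝ}

theorem eventually_half_le_exp_sub (hp : 0 ≤ p) (hqp : q < p) (B : ℝ) :
    ∀ᶠ s in atTop, 1 / 2 ≤ exp (p * s) - B * exp (q * s) := by
  have hdecay : Tendsto (fun s => B * exp ((q - p) * s)) atTop (𝓝 0) := by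
    simpa using ((tendsto_exp_atBot.comp
      (tendsto_id.const_mul_atTop_of_neg (sub_neg.2 hqp))).const_mul B)
  filter_upwards [hdecay.eventually (ge_mem_nhds one_half_pos), eventually_ge_atTop 0]
    with s hsmall hs
  have hgrow : 1 ≤ exp (p * s) := one_le_exp (mul_nonneg hp hs)
  have hfactor : exp (p * s) - B * exp (q * s) = exp (p * s) * (1 - B * exp ((q - p) * s)) := by
    rw [mul_sub, mul_one, mul_left_comm, ← exp_add]
    ring_nf
  rw [hfactor]
  nlinarith

theorem tendsto_integral_exp_sub (hp : p < 0) (hq : q < 0) (B : ℝ) :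
    Tendsto (fun T => ∫ s in (0:ℝ)..T, (exp (p * s) - B * exp (q * s))) atTop
      (𝓝 (B / q - 1 / p)) := by
  have hip := integrableOn_exp_mul_Ioi hp 0
  have hiq := (integrableOn_exp_mul_Ioi hq 0).const_mul B
  have hlim := intervalIntegral_tendsto_integral_Ioi
    (f := fun s => exp (p * s) - B * exp (q * s)) (b := fun T => T) 0 (hip.sub hiq) tendsto_id
  rw [integral_sub hip hiq, integral_const_mul, integral_exp_mul_Ioi hp,
    integral_exp_mul_Ioi hq, mul_zero, mul_zero, exp_zero] at hlim
  convert hlim using 2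
  ring

theorem eventually_integral_exp_sub_pos {B : ℝ} (hB : 0 ≤ B) (hqp : q < p) (hqBp : q < B * p) :
    ∀ᶠ T in atTop, 0 < ∫ s in (0:ℝ)..T, (exp (p * s) - B * exp (q * s)) := by
  rcases le_or_gt 0 p with hp | hp
  · exact (tendsto_intervalIntegral_atTop_of_eventually_ge (by fun_prop) one_half_pos
      (eventually_half_le_exp_sub hp hqp B)).eventually_gt_atTop 0
  · have hq : q < 0 := hqBp.trans_le (mul_nonpos_of_nonneg_of_nonpos hB hp.le)
    refine (tendsto_integral_exp_sub hp hq B).eventually (lt_mem_nhds ?_)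
    rw [div_sub_div _ _ hq.ne hp.ne]
    exact div_pos (by linarith) (mul_pos_of_neg_of_neg hq hp)

end ExpDifference

theorem F₂_sub_F₁ (α ω β γ T : ℝ) :
    F₂ α ω β γ T - F₁ α ω β T = α * exp (-(α * (exp β + 1) * T)) *
      ∫ s in (0:ℝ)..T, (exp ((α * (exp β + 1) - exp β * (α + ω)) * s)
        - exp β * exp ((α * (exp β + 1) - (α + ω * exp γ)) * s)) := by
  unfold F₁ F₂
  set a := α * (exp β + 1)
  set g := fun u => exp ((a - exp β * (α + ω)) * u) - exp β * exp ((a - (α + ω * exp γ)) * u)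
  have hpoint : ∀ s, (exp β + 1 - exp β * exp (-(α + ω * exp γ) * (T - s))) * exp (-a * s)
      - (exp β + 1 - exp (-(exp β * (α + ω)) * (T - s))) * exp (-a * s)
      = exp (-(a * T)) * g (T - s) := by
    intro s
    simp only [g, sub_mul, mul_sub, mul_assoc, ← exp_add]
    ring_nf
  rw [← mul_sub, ← intervalIntegral.integral_sub (Continuous.intervalIntegrable (by fun_prop) _ _)
    (Continuous.intervalIntegrable (by fun_prop) _ _), mul_assoc,
    intervalIntegral.integral_congr (fun s _ => hpoint s), intervalIntegral.integral_const_mul,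
    intervalIntegral.integral_comp_sub_left g T, sub_self, sub_zero]

theorem direction_bias_pos_general (α ω β γ : ℝ) (hα : 0 < α) (hω : 0 < ω)
    (hγ : exp γ > max (exp (2 * β)) (exp β + (α / ω) * (exp β - 1))) :
    ∃ tstar : ℝ, 0 < tstar ∧ ∀ T : ℝ, tstar < T → F₁ α ω β T < F₂ α ω β γ T := by
  obtain ⟨hγ₁, hγ₂⟩ := max_lt_iff.1 hγ
  have hqp : α * (exp β + 1) - (α + ω * exp γ) < α * (exp β + 1) - exp β * (α + ω) := by
    have := mul_lt_mul_of_pos_left hγ₂ hω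
    rw [mul_add, ← mul_assoc, mul_div_cancel₀ _ hω.ne'] at this
    linarith
  have hqBp : α * (exp β + 1) - (α + ω * exp γ)
      < exp β * (α * (exp β + 1) - exp β * (α + ω)) := by
    rw [two_mul, exp_add] at hγ₁
    linarith [mul_lt_mul_of_pos_left hγ₁ hω]
  obtain ⟨t, ht⟩ := eventually_atTop.1 (eventually_integral_exp_sub_pos (exp_pos β).le hqp hqBp)
  refine ⟨max t 1, by positivity, fun T hT => ?_⟩
  rw [← sub_pos, F₂_sub_F₁]
  exact mul_pos (mul_pos hα (exp_pos _)) (ht T ((le_max_left t 1).trans hT.le))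

theorem direction_bias_pos (α ω β γ : ℝ) (hα : 0 < α) (hω : 0 < ω) (hβ : 0 < β)
    (hγ : exp γ > max (exp (2 * β)) (exp β + (α / ω) * (exp β - 1))) :
    ∃ tstar : ℝ, 0 < tstar ∧ ∀ T : ℝ, tstar < T → F₁ α ω β T < F₂ α ω β γ T :=
  direction_bias_pos_general α ω β γ hα hω hγ
end

section
/- Suppose 0 < α < ω e^γ < ω. Then for all t > 0, ω(1 − e^γ)·exp(−α t) + (ω e^γ − α)·exp(−ω t) + (α − ω)·exp(−ω e^γ t) > 0. -/
open Real

/-- Strict convexity of `exp` on the three points `-c < -b < -a`. -/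
lemma mul_exp_neg_lt_add {a b c : ℝ} (hab : a < b) (hbc : b < c) :
    (c - a) * exp (-b) < (c - b) * exp (-a) + (b - a) * exp (-c) := by
  have h := strictConvexOn_exp.secant_strict_mono_aux1 (Set.mem_univ (-c)) (Set.mem_univ (-a))
    (neg_lt_neg hbc) (neg_lt_neg hab)
  linear_combination h

theorem null_subcase_1_1_general (α ω γ : ℝ) (h1 : α < ω * exp γ) (h2 : ω * exp γ < ω) :
    ∀ t : ℝ, 0 < t →
      0 < ω * (1 - exp γ) * exp (-α * t) + (ω * exp γ - α) * exp (-ω * t)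
            + (α - ω) * exp (-(ω * exp γ) * t) := by
  intro t ht
  have key := mul_exp_neg_lt_add (mul_lt_mul_of_pos_right h1 ht) (mul_lt_mul_of_pos_right h2 ht)
  simp only [neg_mul] at key ⊢
  refine pos_of_mul_pos_right (a := t) ?_ ht.le
  linear_combination key

theorem null_subcase_1_1 (α ω γ : ℝ) (hα : 0 < α) (h1 : α < ω * exp γ) (h2 : ω * exp γ < ω) :
    ∀ t : ℝ, 0 < t →
      0 < ω * (1 - exp γ) * exp (-α * t) + (ω * exp γ - α) * exp (-ω * t)
            + (α - ω) * exp (-(ω * exp γ) * t) :=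
  null_subcase_1_1_general α ω γ h1 h2
end

section
/- Suppose β < 0 and 0 < α < ω e^β. Then for all t > 0, ω(e^{2β} − 1)·exp(−α e^β t) + (ω − α e^β)·exp(−ω e^{2β} t) + e^β(α − ω e^β)·exp(−ω t) < 0. -/
open Real

lemma key_convex (a b c : ℝ) (hab : a < b) (hbc : b < c) :
    (b - a) * (exp (-b) - exp (-c)) < (c - b) * (exp (-a) - exp (-b)) := by
  have hu : 0 < b - a := by linarith
  have hv : 0 < c - b := by linarith
  have h1 : (b - a) + 1 < exp (b - a) := Real.add_one_lt_exp (by linarith)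
  have h2 : (-(c - b)) + 1 < exp (-(c - b)) := Real.add_one_lt_exp (by linarith)
  have e1 : exp (-a) = exp (b - a) * exp (-b) := by rw [← Real.exp_add]; ring_nf
  have e2 : exp (-c) = exp (-(c - b)) * exp (-b) := by rw [← Real.exp_add]; ring_nf
  have hb : 0 < exp (-b) := Real.exp_pos _
  rw [e1, e2]
  have k1 : (c - b) * (b - a) < (c - b) * (exp (b - a) - 1) := by nlinarith
  have k2 : (b - a) * (1 - exp (-(c - b))) < (b - a) * (c - b) := by nlinarith
  have k3 : (b - a) * (1 - exp (-(c - b))) < (c - b) * (exp (b - a) - 1) := by nlinarith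
  nlinarith [mul_lt_mul_of_pos_right k3 hb]

theorem homog_subcase_1_1 (α ω β : ℝ) (hβ : β < 0) (hα : 0 < α) (h : α < ω * exp β) :
    ∀ t : ℝ, 0 < t →
      ω * (exp (2 * β) - 1) * exp (-(α * exp β) * t) + (ω - α * exp β) * exp (-(ω * exp (2 * β)) * t)
          + exp β * (α - ω * exp β) * exp (-ω * t) < 0 := by
  intro t ht
  have heβ : 0 < exp β := Real.exp_pos β
  have hω : 0 < ω := by nlinarith
  have he2β : exp (2 * β) < 1 := by
    rw [← Real.exp_zero]; exact Real.exp_lt_exp.mpr (by linarith)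
  have he2 : exp (2 * β) = exp β * exp β := by rw [← Real.exp_add]; ring_nf
  set A := α * exp β with hA
  set B := ω * exp (2 * β) with hB
  set C := ω with hC
  have hAB : A * t < B * t := by
    apply mul_lt_mul_of_pos_right _ ht
    rw [hA, hB, he2]; nlinarith
  have hBC : B * t < C * t := by
    apply mul_lt_mul_of_pos_right _ ht
    rw [hB, hC]; nlinarith
  have key := key_convex (A * t) (B * t) (C * t) hAB hBC
  have eA : exp (-(A * t)) = exp (-A * t) := by ring_nf
  have eB : exp (-(B * t)) = exp (-B * t) := by ring_nf
  have eC : exp (-(C * t)) = exp (-C * t) := by ring_nf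
  rw [eA, eB, eC] at key
  have c1 : ω * (exp (2 * β) - 1) = B - C := by rw [hB, hC]; ring
  have c2 : ω - α * exp β = C - A := by rw [hA, hC]
  have c3 : exp β * (α - ω * exp β) = A - B := by rw [hA, hB, he2]; ring
  rw [c1, c2, c3]
  have expand : ((B - C) * exp (-A * t) + (C - A) * exp (-B * t) + (A - B) * exp (-C * t)) * t
      = (B * t - A * t) * (exp (-B * t) - exp (-C * t))
        - (C * t - B * t) * (exp (-A * t) - exp (-B * t)) := by ring
  nlinarith [mul_pos ht ht]
end
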